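/- Let A be a finite commutative BCK-algebra whose order is a rooted tree with a single atom (each interval [0,a] is a chain). Every proper subalgebra B of A such that B is not downward closed in A has the property that all heights h(b) of elements b ∈ B have a common divisor k > 1. -/

import Mathlib

structure CBCK (α : Type*) where
  sub : α → α → α
  zero : α
  sub_zero : ∀ x, sub x zero = x
  zero_sub : ∀ x, sub zero x = zero
  comm : ∀ x y, sub x (sub x y) = sub y (sub y x)
  exch : ∀ x y z, sub (sub x y) z = sub (sub x z) y

namespace CBCK

variable {α : Type*}

/-- The induced order: `x ≤ y` iff `x ⊖ y = 0`. -/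
def le (A : CBCK α) (x y : α) : Prop := A.sub x y = A.zero

def lt (A : CBCK α) (x y : α) : Prop := A.le x y ∧ x ≠ y

/-- The meet `x ∧ y = x ⊖ (x ⊖ y)`. -/
def meet (A : CBCK α) (x y : α) : α := A.sub x (A.sub x y)

/-- An atom: a minimal nonzero element. -/
def atom (A : CBCK α) (e : α) : Prop := e ≠ A.zero ∧ ∀ x, A.lt x e → x = A.zero

/-- A maximal element. -/
def maximal (A : CBCK α) (m : α) : Prop := ∀ x, A.le m x → x = m

/-- A branching element: `b` with `c, d > b` and `c ∧ d = b`. -/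
def branching (A : CBCK α) (b : α) : Prop :=
  ∃ c d, A.lt b c ∧ A.lt b d ∧ A.meet c d = b

/-- The rooted-tree condition: every interval `[0, a]` is a chain. -/
def chainIntervals (A : CBCK α) : Prop :=
  ∀ a x y, A.le x a → A.le y a → A.le x y ∨ A.le y x

/-- The height of an element: `h(a) = |[0,a]| - 1`. -/
noncomputable def height (A : CBCK α) (a : α) : ℕ :=
  ({x | A.le x a} : Set α).ncard - 1

/-- Iterated subtraction: `x ⊖ 0·y = x`, `x ⊖ (k+1)·y = (x ⊖ k·y) ⊖ y`. -/
def isub (A : CBCK α) (x : α) : ℕ → α → α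
  | 0, _ => x
  | k + 1, y => A.sub (A.isub x k y) y

/-- A subalgebra universe: contains `0` and is closed under `⊖`. -/
def IsSub (A : CBCK α) (B : Set α) : Prop :=
  A.zero ∈ B ∧ ∀ x ∈ B, ∀ y ∈ B, A.sub x y ∈ B

/-- The subalgebra generated by `S`: the least `⊖`-closed subset containing `S ∪ {0}`. -/
def gen (A : CBCK α) (S : Set α) : Set α :=
  ⋂₀ {B : Set α | A.IsSub B ∧ S ⊆ B}

end CBCK

namespace CBCK

variable {α : Type*} (A : CBCK α)

lemma sub_self (x : α) : A.sub x x = A.zero := by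
  have h := A.comm x A.zero
  rw [A.sub_zero, A.zero_sub] at h
  exact h

lemma le_refl (x : α) : A.le x x := A.sub_self x

lemma zero_le (x : α) : A.le A.zero x := A.zero_sub x

lemma le_zero {x : α} (h : A.le x A.zero) : x = A.zero := by
  rw [le, A.sub_zero] at h; exact h

lemma sub_of_le {x y : α} (h : A.le x y) : A.sub y (A.sub y x) = x := by
  rw [A.comm y x, h, A.sub_zero]

lemma le_trans {x y z : α} (h1 : A.le x y) (h2 : A.le y z) : A.le x z := by
  have hx := A.sub_of_le h1
  rw [le, ← hx, A.exch, h2, A.zero_sub]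

lemma le_antisymm {x y : α} (h1 : A.le x y) (h2 : A.le y x) : x = y := by
  have : A.sub x (A.sub x y) = A.sub y (A.sub y x) := A.comm x y
  rw [h1, h2, A.sub_zero, A.sub_zero] at this
  exact this

lemma sub_le (x y : α) : A.le (A.sub x y) x := by
  rw [le, A.exch, A.sub_self, A.zero_sub]

lemma sub_le_sub {x y : α} (z : α) (h : A.le x y) :
    A.le (A.sub x z) (A.sub y z) := by
  have hx := A.sub_of_le h
  rw [le, ← hx, A.exch y _ z]
  exact A.sub_le _ _

end CBCK

namespace CBCK

variable {α : Type*} [Fintype α] (A : CBCK α)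

lemma ncard_setle (a : α) : ({x | A.le x a} : Set α).ncard = A.height a + 1 := by
  have hpos : 0 < ({x | A.le x a} : Set α).ncard := by
    rw [Set.ncard_pos (Set.toFinite _)]
    exact ⟨a, A.le_refl a⟩
  unfold height
  omega

lemma height_le_of_le {x y : α} (h : A.le x y) : A.height x ≤ A.height y := by
  have hsub : ({z | A.le z x} : Set α) ⊆ {z | A.le z y} :=
    fun z hz => A.le_trans hz h
  have := Set.ncard_le_ncard hsub (Set.toFinite _)
  unfold height
  omega

lemma eq_of_le_of_height_eq {x y : α} (h : A.le x y) (hh : A.height x = A.height y) :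
    x = y := by
  have hsub : ({z | A.le z x} : Set α) ⊆ {z | A.le z y} :=
    fun z hz => A.le_trans hz h
  have hcard : ({z | A.le z y} : Set α).ncard ≤ ({z | A.le z x} : Set α).ncard := by
    rw [A.ncard_setle, A.ncard_setle, hh]
  have heq := Set.eq_of_subset_of_ncard_le hsub hcard (Set.toFinite _)
  have : y ∈ ({z | A.le z x} : Set α) := by rw [heq]; exact A.le_refl y
  exact A.le_antisymm h this

lemma height_zero : A.height A.zero = 0 := by
  have : ({x | A.le x A.zero} : Set α) = {A.zero} := by
    ext x
    simp only [Set.mem_setOf_eq, Set.mem_singleton_iff]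
    exact ⟨fun h => A.le_zero h, fun h => h ▸ A.le_refl _⟩
  unfold height
  rw [this, Set.ncard_singleton]

lemma eq_zero_of_height_eq_zero {a : α} (h : A.height a = 0) : a = A.zero := by
  by_contra hne
  have hsub : ({A.zero, a} : Set α) ⊆ {x | A.le x a} := by
    intro x hx
    simp only [Set.mem_insert_iff, Set.mem_singleton_iff] at hx
    rcases hx with rfl | rfl
    · exact A.zero_le _
    · exact A.le_refl _
  have h2 : ({A.zero, a} : Set α).ncard = 2 := Set.ncard_pair (Ne.symm hne)
  have := Set.ncard_le_ncard hsub (Set.toFinite _)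
  rw [h2, A.ncard_setle, h] at this
  omega

/-- The key counting lemma: heights subtract along the order. -/
lemma height_sub_eq (hchain : A.chainIntervals) {z a : α} (hz : A.le z a) :
    A.height a = A.height z + A.height (A.sub a z) := by
  classical
  set S1 : Set α := {x | A.le x z ∧ x ≠ z} with hS1
  set S2 : Set α := {x | A.le z x ∧ A.le x a} with hS2
  have hunion : ({x | A.le x a} : Set α) = S1 ∪ S2 := by
    ext x
    simp only [hS1, hS2, Set.mem_setOf_eq, Set.mem_union]
    constructor
    · intro hx
      rcases hchain a x z hx hz with h | h
      · by_cases hxz : x = z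
        · exact Or.inr ⟨hxz ▸ A.le_refl x, hx⟩
        · exact Or.inl ⟨h, hxz⟩
      · exact Or.inr ⟨h, hx⟩
    · rintro (⟨h, _⟩ | ⟨_, h⟩)
      · exact A.le_trans h hz
      · exact h
  have hdisj : Disjoint S1 S2 := by
    rw [Set.disjoint_left]
    rintro x ⟨hxz, hne⟩ ⟨hzx, _⟩
    exact hne (A.le_antisymm hxz hzx)
  have hn1 : S1.ncard = A.height z := by
    have : S1 = {x | A.le x z} \ {z} := by
      ext x; simp [hS1, Set.mem_diff]
    rw [this, Set.ncard_diff_singleton_of_mem (show z ∈ {x | A.le x z} from A.le_refl z),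
      A.ncard_setle]
    omega
  -- injectivity of x ↦ x ⊖ z on S2
  have haux : ∀ x1 x2, A.le z x1 → A.le x1 x2 → A.le x2 a →
      A.sub x1 z = A.sub x2 z → x1 = x2 := by
    intro x1 x2 hz1 h12 h2a hsub
    set s := A.sub x2 x1 with hs
    set u := A.sub x2 z with hu
    have hx1 : A.sub x2 s = x1 := A.sub_of_le h12
    have e1 : A.sub x1 z = A.sub u s := by
      rw [← hx1, A.exch]
    have e2 : A.sub u s = u := by rw [← e1, hsub]
    have e3 : A.le s (A.sub s u) := by
      show A.sub s (A.sub s u) = A.zero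
      rw [A.comm, e2, A.sub_self]
    have e4 : A.sub s u = s := A.le_antisymm (A.sub_le s u) e3
    rcases hchain x2 s u (A.sub_le _ _) (A.sub_le _ _) with h | h
    · have hs0 : s = A.zero := by rw [← e4]; exact h
      exact A.le_antisymm h12 hs0
    · have hu0 : u = A.zero := by rw [← e2]; exact h
      have hx2z : x2 = z := A.le_antisymm hu0 (A.le_trans hz1 h12)
      have : x1 = z := A.le_antisymm (hx2z ▸ h12) (hx2z ▸ hz1)
      rw [this, hx2z]
  have hinj : Set.InjOn (fun x => A.sub x z) S2 := by
    rintro x1 ⟨hz1, h1a⟩ x2 ⟨hz2, h2a⟩ hsub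
    rcases hchain a x1 x2 h1a h2a with h | h
    · exact haux x1 x2 hz1 h h2a hsub
    · exact (haux x2 x1 hz2 h h1a hsub.symm).symm
  have himg : (fun x => A.sub x z) '' S2 = {w | A.le w (A.sub a z)} := by
    ext w
    simp only [Set.mem_image, Set.mem_setOf_eq, hS2]
    constructor
    · rintro ⟨x, ⟨_, hxa⟩, rfl⟩
      exact A.sub_le_sub z hxa
    · intro hw
      set t := A.sub (A.sub a z) w with ht
      refine ⟨A.sub a t, ⟨?_, A.sub_le a t⟩, ?_⟩
      · have hta : A.le t a := A.le_trans (A.sub_le _ _) (A.sub_le a z)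
        show A.sub z (A.sub a t) = A.zero
        rw [← A.sub_of_le hz, A.exch a (A.sub a z) (A.sub a t),
          A.sub_of_le hta]
        exact A.sub_le _ _
      · show A.sub (A.sub a t) z = w
        rw [A.exch, ht, A.sub_of_le hw]
  have hn2 : S2.ncard = A.height (A.sub a z) + 1 := by
    rw [← Set.ncard_image_of_injOn hinj, himg, A.ncard_setle]
  have := Set.ncard_union_eq hdisj (Set.toFinite _) (Set.toFinite _)
  rw [← hunion, A.ncard_setle, hn1, hn2] at this
  omega

end CBCK
namespace CBCK

variable {α : Type*} [Fintype α] (A : CBCK α)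

lemma height_lt_of_lt {x y : α} (hxy : A.le x y) (hne : x ≠ y) :
    A.height x < A.height y := by
  have h1 := A.height_le_of_le hxy
  rcases lt_or_eq_of_le h1 with h | h
  · exact h
  · exact absurd (A.eq_of_le_of_height_eq hxy h) hne

lemma atom_le_of_ne_zero {e : α} (he : A.atom e) (huniq : ∀ x, A.atom x → x = e)
    {a : α} (ha : a ≠ A.zero) : A.le e a := by
  have key : ∀ n : ℕ, ∀ a : α, A.height a ≤ n → a ≠ A.zero → A.le e a := by
    intro n
    induction n with
    | zero =>
      intro a hn ha
      exact absurd (A.eq_zero_of_height_eq_zero (Nat.le_zero.mp hn)) ha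
    | succ n ih =>
      intro a hn ha
      by_cases hat : A.atom a
      · rw [huniq a hat]; exact A.le_refl e
      · unfold atom at hat
        push_neg at hat
        obtain ⟨x, hlt, hx0⟩ := hat ha
        obtain ⟨hxa, hne⟩ := hlt
        have := A.height_lt_of_lt hxa hne
        exact A.le_trans (ih x (by omega) hx0) hxa
  exact key (A.height a) a le_rfl ha

lemma height_atom {e : α} (he : A.atom e) : A.height e = 1 := by
  have : ({x | A.le x e} : Set α) = {A.zero, e} := by
    ext x
    simp only [Set.mem_setOf_eq, Set.mem_insert_iff, Set.mem_singleton_iff]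
    constructor
    · intro hx
      by_cases hxe : x = e
      · exact Or.inr hxe
      · exact Or.inl (he.2 x ⟨hx, hxe⟩)
    · rintro (rfl | rfl)
      · exact A.zero_le _
      · exact A.le_refl _
  have h2 : ({x | A.le x e} : Set α).ncard = 2 := by
    rw [this]; exact Set.ncard_pair (Ne.symm he.1)
  have := A.ncard_setle e
  omega

lemma atom_of_height_one {b : α} (hb : A.height b = 1) : A.atom b := by
  constructor
  · intro h
    rw [h, A.height_zero] at hb
    omega
  · rintro x ⟨hxb, hne⟩
    have := A.height_lt_of_lt hxb hne
    exact A.eq_zero_of_height_eq_zero (by omega)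

lemma downward_closed_of_atom_mem (hchain : A.chainIntervals)
    {e : α} (he : A.atom e) (huniq : ∀ x, A.atom x → x = e)
    {B : Set α} (hB : A.IsSub B) (heB : e ∈ B) :
    ∀ x y, y ∈ B → A.le x y → x ∈ B := by
  have key : ∀ n : ℕ, ∀ y ∈ B, A.height y ≤ n → ∀ x, A.le x y → x ∈ B := by
    intro n
    induction n with
    | zero =>
      intro y hy hn x hx
      have hy0 : y = A.zero := A.eq_zero_of_height_eq_zero (Nat.le_zero.mp hn)
      have hx0 : A.le x A.zero := by rw [← hy0]; exact hx
      rw [A.le_zero hx0]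
      exact hB.1
    | succ n ih =>
      intro y hy hn x hx
      by_cases hxy : x = y
      · exact hxy ▸ hy
      · have hy0 : y ≠ A.zero := by
          intro h
          apply hxy
          have hx0 : A.le x A.zero := by rw [← h]; exact hx
          rw [A.le_zero hx0, h]
        have hey : A.le e y := A.atom_le_of_ne_zero he huniq hy0
        have hy'B : A.sub y e ∈ B := hB.2 y hy e heB
        have hh : A.height y = 1 + A.height (A.sub y e) := by
          rw [A.height_sub_eq hchain hey, A.height_atom he]
        rcases hchain y x (A.sub y e) hx (A.sub_le y e) with h | h
        · exact ih (A.sub y e) hy'B (by omega) x h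
        · have h1 := A.height_le_of_le h
          have h2 := A.height_lt_of_lt hx hxy
          have : x = A.sub y e := (A.eq_of_le_of_height_eq h (by omega)).symm
          exact this ▸ hy'B
  intro x y hy hx
  exact key (A.height y) y hy le_rfl x hx

end CBCK


/-- Every proper subalgebra of a finite single-atom rooted-tree cBCK-algebra
that is not downward closed has all its heights sharing a common divisor `k > 1`. -/
theorem stmt12 {α : Type*} [Fintype α] (A : CBCK α)
    (hchain : A.chainIntervals)
    (e : α) (he : A.atom e) (huniq : ∀ x, A.atom x → x = e)
    (B : Set α) (hB : A.IsSub B) (hproper : B ≠ Set.univ)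
    (hnd : ¬ ∀ x y, y ∈ B → A.le x y → x ∈ B) :
    ∃ k : ℕ, 1 < k ∧ ∀ b ∈ B, k ∣ A.height b := by
  classical
  push_neg at hnd
  obtain ⟨x0, y0, hy0B, hx0y0, hx0B⟩ := hnd
  have heB : e ∉ B := by
    intro heB
    exact hx0B (A.downward_closed_of_atom_mem hchain he huniq hB heB x0 y0 hy0B hx0y0)
  have hy00 : y0 ≠ A.zero := by
    intro h
    apply hx0B
    have hx0 : A.le x0 A.zero := by rw [← h]; exact hx0y0
    rw [A.le_zero hx0]
    exact hB.1
  -- minimal nonzero height element of B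
  set sB : Set α := {b | b ∈ B ∧ b ≠ A.zero} with hsB
  obtain ⟨b, ⟨hbB, hb0⟩, hbmin⟩ :=
    Set.exists_min_image sB A.height (Set.toFinite _) ⟨y0, hy0B, hy00⟩
  set m := A.height b with hm
  have hm1 : 1 ≤ m := by
    rcases Nat.eq_zero_or_pos m with h | h
    · exact absurd (A.eq_zero_of_height_eq_zero h) hb0
    · exact h
  have hmne1 : m ≠ 1 := by
    intro h
    have : b = e := huniq b (A.atom_of_height_one h)
    exact heB (this ▸ hbB)
  refine ⟨m, by omega, ?_⟩
  have main : ∀ n : ℕ, ∀ c ∈ B, A.height c ≤ n → m ∣ A.height c := by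
    intro n
    induction n with
    | zero =>
      intro c _ hn
      rw [Nat.le_zero.mp hn]
      exact dvd_zero m
    | succ n ih =>
      intro c hc hn
      by_cases hc0 : c = A.zero
      · rw [hc0, A.height_zero]; exact dvd_zero m
      · set d := A.sub c (A.sub c b) with hd
        have hdB : d ∈ B := hB.2 c hc _ (hB.2 c hc b hbB)
        have hd_eq : d = A.sub b (A.sub b c) := A.comm c b
        have hdb : A.le d b := hd_eq ▸ A.sub_le b (A.sub b c)
        have hdc : A.le d c := A.sub_le c (A.sub c b)
        by_cases hd0 : d = A.zero
        · -- contradiction: e = 0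
          exfalso
          have hb_eq : A.sub b c = b := by
            have h1 : A.le b (A.sub b c) := by
              show A.sub b (A.sub b c) = A.zero
              rw [← hd_eq]; exact hd0
            exact A.le_antisymm (A.sub_le b c) h1
          have heb : A.le e b := A.atom_le_of_ne_zero he huniq hb0
          have hec : A.le e c := A.atom_le_of_ne_zero he huniq hc0
          have h2 := A.exch b c (A.sub b e)
          rw [hb_eq, A.sub_of_le heb] at h2
          -- h2 : e = A.sub e c
          rw [hec] at h2
          exact he.1 h2
        · have hdm : m ≤ A.height d := hbmin d ⟨hdB, hd0⟩
          have hdm2 : A.height d ≤ m := A.height_le_of_le hdb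
          have hdb_eq : d = b := A.eq_of_le_of_height_eq hdb (by omega)
          have hbc : A.le b c := hdb_eq ▸ hdc
          have hsplit : A.height c = m + A.height (A.sub c b) :=
            A.height_sub_eq hchain hbc
          have hcbB : A.sub c b ∈ B := hB.2 c hc b hbB
          have hih : m ∣ A.height (A.sub c b) := ih _ hcbB (by omega)
          rw [hsplit]
          exact dvd_add (dvd_refl m) hih
  intro c hc
  exact main (A.height c) c hc le_rfl
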